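/- Let y₁, y₂ ∈ ℝ and let θ* be a critical point of the quartic objective E (i.e. E'(θ*) = 0), and let α ≥ 0. If 2α(y₁ − θ*²) < E''(θ*), then θ* is a strict local minimum point of the α-expanded objective E_α; and if 2α(y₁ − θ*²) > E''(θ*), then θ* is not a local minimum point of E_α. -/

import Mathlib

open Filter Topology

/-- The quartic least-squares objective `E(θ) = ½((y₁ − θ²)² + (y₂ − θ)²)`. -/
noncomputable def quarticE (y₁ y₂ : ℝ) (θ : ℝ) : ℝ :=
  (1 / 2) * ((y₁ - θ ^ 2) ^ 2 + (y₂ - θ) ^ 2)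

/-- The `α`-expanded quartic objective at the point `θs`. -/
noncomputable def quarticEexp (y₁ y₂ θs α : ℝ) (θ : ℝ) : ℝ :=
  (1 / 2) * (((y₁ + α * (y₁ - θs ^ 2)) - θ ^ 2) ^ 2 + ((y₂ + α * (y₂ - θs)) - θ) ^ 2)

/-!
Expanding the targets by `α` times the residuals at a critical point `θ*` of `E` keeps `θ*`
critical, and a Taylor expansion of the quartic `E_α` around `θ*` gives exactly
`E_α(θ) - E_α(θ*) = ½ (θ - θ*)² (E''(θ*) - 2α(y₁ - θ*²) + 4θ*(θ - θ*) + (θ - θ*)²)`.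
Near `θ*` the sign of the bracket is that of its constant term, which decides the question.
-/

section SquareFactor

variable {f g : ℝ → ℝ} {a : ℝ}

theorem eventually_lt_of_sub_eq_sq_mul (hfg : ∀ x, f x - f a = (x - a) ^ 2 * g x)
    (hg : ContinuousAt g a) (ha : 0 < g a) : ∀ᶠ x in 𝓝[≠] a, f a < f x := by
  filter_upwards [nhdsWithin_le_nhds (continuousAt_const.eventually_lt hg ha),
    self_mem_nhdsWithin] with x hgx hx
  have hsq : 0 < (x - a) ^ 2 := sq_pos_of_ne_zero (sub_ne_zero.mpr hx)
  linarith [hfg x, mul_pos hsq hgx]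

theorem not_isLocalMin_of_sub_eq_sq_mul (hfg : ∀ x, f x - f a = (x - a) ^ 2 * g x)
    (hg : ContinuousAt g a) (ha : g a < 0) : ¬ IsLocalMin f a := by
  intro hmin
  have hlt : ∀ᶠ x in 𝓝[≠] a, f x < f a := by
    have hneg := eventually_lt_of_sub_eq_sq_mul (f := -f) (g := -g)
      (fun x ↦ by simp only [Pi.neg_apply]; linarith [hfg x]) hg.neg (by simpa using ha)
    simpa using hneg
  obtain ⟨x, hxlt, hxge⟩ := (hlt.and (hmin.filter_mono nhdsWithin_le_nhds)).exists
  exact hxlt.not_ge hxge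

end SquareFactor

section Quartic

variable (y₁ y₂ : ℝ)

theorem hasDerivAt_quarticE (θ : ℝ) :
    HasDerivAt (quarticE y₁ y₂) (2 * θ ^ 3 - 2 * y₁ * θ + θ - y₂) θ := by
  refine ((((hasDerivAt_pow 2 θ).const_sub y₁).pow 2).add
    (((hasDerivAt_id' θ).const_sub y₂).pow 2)).const_mul (1 / 2 : ℝ) |>.congr_deriv ?_
  push_cast
  ring

theorem deriv_quarticE : deriv (quarticE y₁ y₂) = fun θ ↦ 2 * θ ^ 3 - 2 * y₁ * θ + θ - y₂ :=
  funext fun θ ↦ (hasDerivAt_quarticE y₁ y₂ θ).deriv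

theorem iteratedDeriv_two_quarticE (θ : ℝ) :
    iteratedDeriv 2 (quarticE y₁ y₂) θ = 6 * θ ^ 2 + 1 - 2 * y₁ := by
  rw [iteratedDeriv_succ, iteratedDeriv_one, deriv_quarticE]
  refine HasDerivAt.deriv ?_
  refine ((((hasDerivAt_pow 3 θ).const_mul 2).sub ((hasDerivAt_id θ).const_mul (2 * y₁))).add
    (hasDerivAt_id θ)).sub_const y₂ |>.congr_deriv ?_
  push_cast
  ring

theorem quarticEexp_sub_quarticEexp {θs : ℝ} (α : ℝ) (hcrit : deriv (quarticE y₁ y₂) θs = 0)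
    (θ : ℝ) :
    quarticEexp y₁ y₂ θs α θ - quarticEexp y₁ y₂ θs α θs = (θ - θs) ^ 2 *
      ((iteratedDeriv 2 (quarticE y₁ y₂) θs - 2 * α * (y₁ - θs ^ 2)
        + 4 * θs * (θ - θs) + (θ - θs) ^ 2) / 2) := by
  rw [deriv_quarticE] at hcrit
  rw [iteratedDeriv_two_quarticE]
  unfold quarticEexp
  linear_combination (θ - θs) * (1 + α) * hcrit

end Quartic

theorem stmt_6_general (y₁ y₂ θs α : ℝ)
    (hcrit : deriv (quarticE y₁ y₂) θs = 0) :
    (2 * α * (y₁ - θs ^ 2) < iteratedDeriv 2 (quarticE y₁ y₂) θs →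
      ∀ᶠ θ in 𝓝[≠] θs, quarticEexp y₁ y₂ θs α θs < quarticEexp y₁ y₂ θs α θ) ∧
    (2 * α * (y₁ - θs ^ 2) > iteratedDeriv 2 (quarticE y₁ y₂) θs →
      ¬ IsLocalMin (quarticEexp y₁ y₂ θs α) θs) := by
  have hfg := quarticEexp_sub_quarticEexp y₁ y₂ α hcrit
  have hg : ContinuousAt (fun θ ↦ (iteratedDeriv 2 (quarticE y₁ y₂) θs - 2 * α * (y₁ - θs ^ 2)
      + 4 * θs * (θ - θs) + (θ - θs) ^ 2) / 2) θs := by fun_prop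
  refine ⟨fun h ↦ ?_, fun h ↦ ?_⟩
  · exact eventually_lt_of_sub_eq_sq_mul hfg hg (by simp only [sub_self]; linarith)
  · exact not_isLocalMin_of_sub_eq_sq_mul hfg hg (by simp only [sub_self]; linarith)

theorem stmt_6 (y₁ y₂ θs α : ℝ) (hα : 0 ≤ α)
    (hcrit : deriv (quarticE y₁ y₂) θs = 0) :
    (2 * α * (y₁ - θs ^ 2) < iteratedDeriv 2 (quarticE y₁ y₂) θs →
      ∀ᶠ θ in 𝓝[≠] θs, quarticEexp y₁ y₂ θs α θs < quarticEexp y₁ y₂ θs α θ) ∧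
    (2 * α * (y₁ - θs ^ 2) > iteratedDeriv 2 (quarticE y₁ y₂) θs →
      ¬ IsLocalMin (quarticEexp y₁ y₂ θs α) θs) :=
  stmt_6_general y₁ y₂ θs α hcrit
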